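/- Let d1, d2 be coprime integers with d1, d2 ≥ 2, let d3 be a positive integer, set w = exp(2πi/d3), and let H12(z) = (1 − z^{d1·d2})/((1 − z^{d1})(1 − z^{d2})). Then for every complex z with |z| < 1, (1/d3) Σ_{k=0}^{d3−1} H12(z·w^k) − 1 = Σ_{j} z^{j·d3}, where the sum on the right runs over all positive integers j such that j·d3 ∈ S(d1,d2). -/

import Mathlib

/-!
Every element of `S(d1,d2)` is `x d1 + y d2` for a unique `x < d2` (coprimality), so on the unit
disc the Hilbert series is the generating function `∑_{n ∈ S} u^n` of the semigroup: it factors as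
`(∑_{x<d2} u^{x d1}) (∑_y u^{y d2})`. Averaging a power series over the `d3`-th roots of unity
keeps exactly the exponents divisible by `d3` (series multisection), and the term `j = 0` is the
`1` contributed by `0 ∈ S`.
-/

open Complex Finset

def numericalSemigroup (d1 d2 : ℕ) : Set ℕ := {n | ∃ x y : ℕ, n = x * d1 + y * d2}

namespace numericalSemigroup

variable {d1 d2 : ℕ}

lemma zero_mem : 0 ∈ numericalSemigroup d1 d2 := ⟨0, 0, by simp⟩

lemma eq_of_mul_add_mul_eq (hcop : d1.Coprime d2) (hd2 : 0 < d2) {x x' y y' : ℕ} (hx : x < d2)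
    (hx' : x' < d2) (h : x * d1 + y * d2 = x' * d1 + y' * d2) : x = x' ∧ y = y' := by
  have hmod : x * d1 ≡ x' * d1 [MOD d2] := by
    simpa only [Nat.ModEq, Nat.add_mul_mod_self_right] using congrArg (· % d2) h
  have hxx' : x = x' := (hmod.cancel_right_of_coprime hcop.symm).eq_of_lt_of_lt hx hx'
  subst hxx'
  exact ⟨rfl, Nat.eq_of_mul_eq_mul_right hd2 (Nat.add_left_cancel h)⟩

noncomputable def finProdEquiv (hcop : d1.Coprime d2) (hd2 : 0 < d2) :
    Fin d2 × ℕ ≃ numericalSemigroup d1 d2 :=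
  Equiv.ofBijective (fun p => ⟨p.1 * d1 + p.2 * d2, p.1, p.2, rfl⟩) <| by
    refine ⟨fun ⟨x, y⟩ ⟨x', y'⟩ h => ?_, fun ⟨n, x, y, hn⟩ => ?_⟩
    · obtain ⟨hx, hy⟩ := eq_of_mul_add_mul_eq hcop hd2 x.2 x'.2 (Subtype.mk.inj h)
      exact Prod.ext (Fin.ext hx) hy
    · refine ⟨(⟨x % d2, Nat.mod_lt x hd2⟩, y + x / d2 * d1), Subtype.ext ?_⟩
      simp only [hn]
      nth_rw 3 [← Nat.mod_add_div x d2]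
      ring

theorem tsum_pow_eq (hcop : d1.Coprime d2) (hd1 : 0 < d1) (hd2 : 0 < d2) {u : ℂ}
    (hu : ‖u‖ < 1) :
    ∑' n : numericalSemigroup d1 d2, u ^ (n : ℕ) =
      (1 - u ^ (d1 * d2)) / ((1 - u ^ d1) * (1 - u ^ d2)) := by
  have norm_pow_lt_one {m : ℕ} (hm : 0 < m) : ‖u ^ m‖ < 1 := by
    rw [norm_pow]; exact pow_lt_one₀ (norm_nonneg u) hu hm.ne'
  have sub_ne_zero_of_pos {m : ℕ} (hm : 0 < m) : 1 - u ^ m ≠ 0 := fun h => by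
    simpa [← eq_of_sub_eq_zero h] using norm_pow_lt_one hm
  calc ∑' n : numericalSemigroup d1 d2, u ^ (n : ℕ)
      = ∑' p : Fin d2 × ℕ, (u ^ d1) ^ (p.1 : ℕ) * (u ^ d2) ^ p.2 := by
        rw [← (finProdEquiv hcop hd2).tsum_eq]
        simp only [finProdEquiv, Equiv.ofBijective_apply, pow_add, ← pow_mul, mul_comm]
    _ = (∑ i ∈ range d2, (u ^ d1) ^ i) * ∑' j, (u ^ d2) ^ j := by
        rw [← tsum_mul_tsum_of_summable_norm (f := fun i : Fin d2 => (u ^ d1) ^ (i : ℕ))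
          Summable.of_finite
          (summable_norm_geometric_of_norm_lt_one (norm_pow_lt_one hd2)), tsum_fintype,
          Fin.sum_univ_eq_sum_range (fun i => (u ^ d1) ^ i)]
    _ = (1 - u ^ (d1 * d2)) / ((1 - u ^ d1) * (1 - u ^ d2)) := by
        rw [geom_sum_eq fun h => sub_ne_zero_of_pos hd1 (by rw [h, sub_self]),
          tsum_geometric_of_norm_lt_one (norm_pow_lt_one hd2), ← one_div, div_mul_div_comm,
          mul_one, ← neg_sub 1 (u ^ d1), ← neg_sub 1, neg_mul, neg_div_neg_eq, pow_mul]

end numericalSemigroup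

theorem IsPrimitiveRoot.geom_sum_pow_eq_ite {R : Type*} [CommRing R] [IsDomain R] {ζ : R} {d : ℕ}
    (hζ : IsPrimitiveRoot ζ d) (n : ℕ) :
    ∑ k ∈ range d, (ζ ^ n) ^ k = if d ∣ n then (d : R) else 0 := by
  split_ifs with hdvd
  · simp [(hζ.pow_eq_one_iff_dvd n).2 hdvd]
  · have hne : ζ ^ n - 1 ≠ 0 := sub_ne_zero.2 fun h => hdvd ((hζ.pow_eq_one_iff_dvd n).1 h)
    refine eq_zero_of_ne_zero_of_mul_left_eq_zero hne ?_
    rw [mul_geom_sum, ← pow_mul, mul_comm, pow_mul, hζ.pow_eq_one, one_pow, sub_self]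

theorem tsum_subtype_ite_dvd {α : Type*} [AddCommMonoid α] [TopologicalSpace α] (A : Set ℕ)
    {d : ℕ} (hd : 0 < d) (f : ℕ → α) :
    ∑' n : A, (if d ∣ (n : ℕ) then f n else 0) = ∑' j : {j : ℕ | j * d ∈ A}, f (j * d) := by
  let g : {j : ℕ | j * d ∈ A} → A := fun j => ⟨j * d, j.2⟩
  have hg : Function.Injective g := fun i j h =>
    Subtype.ext (Nat.eq_of_mul_eq_mul_right hd (congrArg Subtype.val h))
  have hsupp : Function.support (fun n : A => if d ∣ (n : ℕ) then f n else 0) ⊆ Set.range g := by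
    rintro ⟨n, hn⟩ hne
    obtain ⟨j, rfl⟩ : d ∣ n := by by_contra h; exact hne (if_neg h)
    exact ⟨⟨j, show j * d ∈ A by rwa [mul_comm]⟩, Subtype.ext (mul_comm j d)⟩
  rw [← hg.tsum_eq hsupp]
  exact tsum_congr fun j => if_pos (dvd_mul_left d j)

lemma IsPrimitiveRoot.norm_mul_pow {ζ : ℂ} {d : ℕ} (hζ : IsPrimitiveRoot ζ d) (hd : 0 < d)
    (z : ℂ) (k : ℕ) : ‖z * ζ ^ k‖ = ‖z‖ := by
  rw [norm_mul, norm_pow, hζ.norm'_eq_one hd.ne', one_pow, mul_one]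

theorem IsPrimitiveRoot.inv_mul_sum_tsum_pow {ζ : ℂ} {d : ℕ} (hζ : IsPrimitiveRoot ζ d)
    (hd : 0 < d) (A : Set ℕ) {z : ℂ} (hz : ‖z‖ < 1) :
    (d : ℂ)⁻¹ * ∑ k ∈ range d, ∑' n : A, (z * ζ ^ k) ^ (n : ℕ) =
      ∑' j : {j : ℕ | j * d ∈ A}, z ^ (j * d) := by
  have hsum (k : ℕ) : Summable fun n : A => (z * ζ ^ k) ^ (n : ℕ) :=
    (summable_geometric_of_norm_lt_one ((hζ.norm_mul_pow hd z k).trans_lt hz)).subtype A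
  have hd' : (d : ℂ) ≠ 0 := Nat.cast_ne_zero.2 hd.ne'
  rw [← Summable.tsum_finsetSum fun k _ => hsum k, ← tsum_mul_left,
    ← tsum_subtype_ite_dvd A hd]
  refine tsum_congr fun n => ?_
  simp_rw [mul_pow, ← pow_mul, mul_comm _ (n : ℕ), pow_mul, ← mul_sum, hζ.geom_sum_pow_eq_ite]
  split_ifs
  · field_simp
  · simp

theorem tsum_subtype_eq_add_tsum_pos {α : Type*} [NormedAddCommGroup α] [CompleteSpace α]
    {s : Set ℕ} (h0 : 0 ∈ s) {f : ℕ → α} (hf : Summable f) :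
    ∑' n : s, f n = f 0 + ∑' n : {n : ℕ | 0 < n ∧ n ∈ s}, f n := by
  have hs : s = {0} ∪ {n : ℕ | 0 < n ∧ n ∈ s} := by
    ext n
    rcases n.eq_zero_or_pos with rfl | hn
    · simp [h0]
    · simp [hn, hn.ne']
  conv_lhs => rw [hs]
  rw [Summable.tsum_union_disjoint (by simp) (hf.subtype _) (hf.subtype _), tsum_singleton]

/-- For coprime `d1, d2 ≥ 2`, `d3 > 0`, `w = exp(2πi/d3)` and `|z| < 1`,
`(1/d3) Σ_{k=0}^{d3−1} H12(z w^k) − 1 = Σ_j z^{j d3}`, the sum running over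
positive integers `j` with `j·d3 ∈ S(d1,d2)`. -/
theorem psi3_series_representation (d1 d2 d3 : ℕ)
    (h1 : 2 ≤ d1) (h2 : 2 ≤ d2) (hcop : Nat.Coprime d1 d2) (hd3 : 0 < d3)
    (w : ℂ) (hw : w = Complex.exp (2 * Real.pi * Complex.I / d3))
    (H12 : ℂ → ℂ)
    (hH12 : ∀ u : ℂ, H12 u = (1 - u ^ (d1 * d2)) / ((1 - u ^ d1) * (1 - u ^ d2)))
    (z : ℂ) (hz : ‖z‖ < 1) :
    (d3 : ℂ)⁻¹ * (∑ k ∈ Finset.range d3, H12 (z * w ^ k)) - 1 =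
      ∑' j : {j : ℕ | 0 < j ∧ ∃ x y : ℕ, j * d3 = x * d1 + y * d2},
        z ^ ((j : ℕ) * d3) := by
  have hprim : IsPrimitiveRoot w d3 := hw ▸ Complex.isPrimitiveRoot_exp d3 hd3.ne'
  have hH (k : ℕ) : H12 (z * w ^ k) =
      ∑' n : numericalSemigroup d1 d2, (z * w ^ k) ^ (n : ℕ) := by
    rw [hH12, numericalSemigroup.tsum_pow_eq hcop (by omega) (by omega)
      ((hprim.norm_mul_pow hd3 z k).trans_lt hz)]
  have hgeom : Summable fun j : ℕ => z ^ (j * d3) := by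
    simpa only [mul_comm _ d3, pow_mul] using summable_geometric_of_norm_lt_one
      (by rw [norm_pow]; exact pow_lt_one₀ (norm_nonneg z) hz hd3.ne' : ‖z ^ d3‖ < 1)
  have h0 : 0 ∈ {j : ℕ | j * d3 ∈ numericalSemigroup d1 d2} := by
    simpa using numericalSemigroup.zero_mem
  rw [sum_congr rfl fun k _ => hH k, hprim.inv_mul_sum_tsum_pow hd3 _ hz,
    tsum_subtype_eq_add_tsum_pos h0 hgeom, zero_mul, pow_zero, add_sub_cancel_left]
  rfl
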